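/- Let h be a Schwartz function on ℝ and A > 1. For y ≥ 1/2 and any (x,φ,ξ), |Θ_h(x+iy, φ; ξ)|² = y^{1/2} ∑_{m∈ℤ} |h_φ(y^{1/2}(m−ξ₂))|² + O(C_{A,h_φ} · y^{(−A+1)/2}), where C_{A,h_φ} = sup_{x∈ℝ} |(1+|x|)^A h_φ(x)|², and the error term is uniform in x, φ, ξ. Moreover the sum over m is dominated by the single term m₀ with |m₀ − ξ₂| ≤ 1/2, i.e. |Θ_h(x+iy,φ;ξ)|² = y^{1/2} |h_φ(y^{1/2}(m₀−ξ₂))|² + O(C_{A,h_φ}·y^{(−A+1)/2}). -/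

import Mathlib

open MeasureTheory

/-- The Jacobi theta sum at `φ = 0` (so that `h_φ = h`). -/
noncomputable def Theta (h : SchwartzMap ℝ ℂ) (x y ξ₁ ξ₂ : ℝ) : ℂ :=
  (y ^ ((1 : ℝ) / 4) : ℝ) *
    ∑' n : ℤ, h (((n : ℝ) - ξ₂) * Real.sqrt y) *
      Complex.exp (2 * Real.pi * Complex.I *
        (((1 : ℝ) / 2) * ((n : ℝ) - ξ₂) ^ 2 * x + (n : ℝ) * ξ₁))

noncomputable def Zc (A : ℝ) : ℝ := ∑' k : ℤ, |(k : ℝ)| ^ (-A)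

lemma Zc_nonneg (A : ℝ) : 0 ≤ Zc A :=
  tsum_nonneg fun k => Real.rpow_nonneg (abs_nonneg _) _

lemma shift_summable (A : ℝ) (hA : 1 < A) (m₀ : ℤ) :
    Summable fun n : ℤ => |(n : ℝ) - (m₀ : ℝ)| ^ (-A) := by
  refine (Equiv.addRight m₀).summable_iff.mp ?_
  refine (Real.summable_abs_int_rpow hA).congr fun k => ?_
  simp only [Function.comp, Equiv.coe_addRight]
  congr 2
  push_cast
  ring

lemma shift_tsum (A : ℝ) (m₀ : ℤ) :
    (∑' n : ℤ, |(n : ℝ) - (m₀ : ℝ)| ^ (-A)) = Zc A := by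
  rw [Zc, ← (Equiv.addRight m₀).tsum_eq (fun n : ℤ => |(n : ℝ) - (m₀ : ℝ)| ^ (-A))]
  refine tsum_congr fun k => ?_
  simp only [Equiv.coe_addRight]
  congr 2
  push_cast
  ring

lemma term_bound (A u t k : ℝ) (hA : 1 < A) (hu : 0 < u)
    (hk1 : 1 ≤ k) (hkt : k / 2 ≤ |t|) :
    (1 + |t * u|) ^ (-A) ≤ 2 ^ A * u ^ (-A) * k ^ (-A) := by
  have hA0 : -A ≤ 0 := by linarith
  have hpos : 0 < u * k / 2 := by positivity
  have hle : u * k / 2 ≤ 1 + |t * u| := by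
    rw [abs_mul, abs_of_pos hu]
    nlinarith [abs_nonneg t]
  refine (Real.rpow_le_rpow_of_nonpos hpos hle hA0).trans_eq ?_
  rw [show u * k / 2 = u * (k * (2 : ℝ)⁻¹) by ring,
    Real.mul_rpow hu.le (by positivity),
    Real.mul_rpow (by linarith) (by norm_num),
    Real.inv_rpow (by norm_num), Real.rpow_neg (by norm_num : (0:ℝ) ≤ 2), inv_inv]
  ring

lemma exp_part_norm (n : ℤ) (x ξ₁ ξ₂ : ℝ) :
    ‖Complex.exp (2 * Real.pi * Complex.I *
        (((1 : ℝ) / 2) * ((n : ℝ) - ξ₂) ^ 2 * x + (n : ℝ) * ξ₁))‖ = 1 := by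
  have h2 : (2 * Real.pi * Complex.I *
        (((1 : ℝ) / 2) * ((n : ℝ) - ξ₂) ^ 2 * (x : ℂ) + (n : ℝ) * (ξ₁ : ℂ)))
      = ((2 * Real.pi * (((1 : ℝ)/2) * ((n : ℝ) - ξ₂)^2 * x + (n : ℝ) * ξ₁) : ℝ) : ℂ)
          * Complex.I := by
    push_cast; ring
  rw [h2, Complex.norm_exp_ofReal_mul_I]

set_option maxHeartbeats 2000000 in
lemma main_est (h : SchwartzMap ℝ ℂ) (A : ℝ) (hA : 1 < A) (CA : ℝ)
    (hCA : ∀ x : ℝ, ((1 + |x|) ^ A * ‖h x‖) ^ 2 ≤ CA)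
    (y : ℝ) (hy : 1/2 ≤ y) (x ξ₁ ξ₂ : ℝ) (m₀ : ℤ) (hm₀ : |(m₀ : ℝ) - ξ₂| ≤ 1/2) :
    |‖Theta h x y ξ₁ ξ₂‖ ^ 2 - Real.sqrt y * ‖h (Real.sqrt y * ((m₀ : ℝ) - ξ₂))‖ ^ 2|
      ≤ (2 * 2^A * Zc A + (2^A)^3 * (Zc A)^2) * CA * y ^ ((-A + 1) / 2)
    ∧ |Real.sqrt y * ∑' m : ℤ, ‖h (Real.sqrt y * ((m : ℝ) - ξ₂))‖ ^ 2
        - Real.sqrt y * ‖h (Real.sqrt y * ((m₀ : ℝ) - ξ₂))‖ ^ 2|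
      ≤ (2^A)^3 * Zc A * CA * y ^ ((-A + 1) / 2) := by
  classical
  have hy0 : (0:ℝ) < y := by linarith
  set u := Real.sqrt y with hu_def
  have hu : 0 < u := Real.sqrt_pos.mpr hy0
  have hCA0 : 0 ≤ CA := le_trans (by positivity) (hCA 0)
  set B := Real.sqrt CA with hB_def
  have hB0 : 0 ≤ B := Real.sqrt_nonneg _
  have hBsq : B ^ 2 = CA := Real.sq_sqrt hCA0
  set Z := Zc A with hZ_def
  have hZ0 : 0 ≤ Z := Zc_nonneg A
  set P := y ^ ((-A + 1) / 2) with hP_def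
  have hP0 : 0 ≤ P := Real.rpow_nonneg hy0.le _
  -- decay of h
  have hdecay : ∀ t : ℝ, ‖h t‖ ≤ B * (1 + |t|) ^ (-A) := by
    intro t
    have hb : (0:ℝ) < (1 + |t|) ^ A := Real.rpow_pos_of_pos (by positivity) _
    have h2 : (1 + |t|) ^ A * ‖h t‖ ≤ B := by
      have h4 : (1 + |t|) ^ A * ‖h t‖ = Real.sqrt (((1 + |t|) ^ A * ‖h t‖) ^ 2) := by
        rw [Real.sqrt_sq (by positivity)]
      rw [h4, hB_def]
      exact Real.sqrt_le_sqrt (hCA t)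
    rw [Real.rpow_neg (by positivity), ← div_eq_mul_inv, le_div_iff₀ hb]
    nlinarith [h2]
  -- basic functions
  set a : ℤ → ℝ := fun n => ‖h (((n : ℝ) - ξ₂) * u)‖ with ha_def
  have ha0 : ∀ n, 0 ≤ a n := fun n => norm_nonneg _
  set G : ℤ → ℝ := fun n => |(n : ℝ) - (m₀ : ℝ)| ^ (-A) with hG_def
  have hG0 : ∀ n, 0 ≤ G n := fun n => Real.rpow_nonneg (abs_nonneg _) _
  have hGsum : Summable G := shift_summable A hA m₀
  have hGt : (∑' n, G n) = Z := shift_tsum A m₀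
  have hGm0 : G m₀ = 0 := by
    simp only [hG_def, sub_self, abs_zero]
    exact Real.zero_rpow (by linarith)
  set D := B * (2 ^ A * u ^ (-A)) with hD_def
  have hD0 : 0 ≤ D := by
    refine mul_nonneg hB0 (mul_nonneg ?_ ?_)
    · exact Real.rpow_nonneg (by norm_num) _
    · exact Real.rpow_nonneg hu.le _
  -- tail term bounds
  have hk1 : ∀ n : ℤ, n ≠ m₀ → (1:ℝ) ≤ |(n : ℝ) - (m₀ : ℝ)| := by
    intro n hn
    exact_mod_cast Int.one_le_abs (sub_ne_zero.mpr hn)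
  have hab : ∀ n : ℤ, n ≠ m₀ → a n ≤ D * G n := by
    intro n hn
    have htri : |(n : ℝ) - (m₀ : ℝ)| ≤ |(n : ℝ) - ξ₂| + |(m₀ : ℝ) - ξ₂| :=
      calc |(n : ℝ) - (m₀ : ℝ)| = |((n : ℝ) - ξ₂) + (ξ₂ - (m₀ : ℝ))| := by ring_nf
        _ ≤ |(n : ℝ) - ξ₂| + |ξ₂ - (m₀ : ℝ)| := abs_add_le _ _
        _ = |(n : ℝ) - ξ₂| + |(m₀ : ℝ) - ξ₂| := by rw [abs_sub_comm ξ₂]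
    have hkt : |(n : ℝ) - (m₀ : ℝ)| / 2 ≤ |(n : ℝ) - ξ₂| := by
      have := hk1 n hn; linarith
    have h1 := term_bound A u ((n : ℝ) - ξ₂) (|(n : ℝ) - (m₀ : ℝ)|) hA hu (hk1 n hn) hkt
    calc a n ≤ B * (1 + |((n : ℝ) - ξ₂) * u|) ^ (-A) := hdecay _
      _ ≤ B * (2 ^ A * u ^ (-A) * |(n : ℝ) - (m₀ : ℝ)| ^ (-A)) :=
          mul_le_mul_of_nonneg_left h1 hB0
      _ = D * G n := by rw [hD_def, hG_def]; ring
  have haB : ∀ n, a n ≤ B := by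
    intro n
    refine (hdecay _).trans ?_
    have h1 : (1 + |((n : ℝ) - ξ₂) * u|) ^ (-A) ≤ 1 :=
      Real.rpow_le_one_of_one_le_of_nonpos
        (by linarith [abs_nonneg (((n : ℝ) - ξ₂) * u)]) (by linarith)
    calc B * (1 + |((n : ℝ) - ξ₂) * u|) ^ (-A) ≤ B * 1 :=
          mul_le_mul_of_nonneg_left h1 hB0
      _ = B := mul_one B
  -- the theta series
  set c : ℤ → ℂ := fun n => h (((n : ℝ) - ξ₂) * u) *
      Complex.exp (2 * Real.pi * Complex.I *
        (((1 : ℝ) / 2) * ((n : ℝ) - ξ₂) ^ 2 * x + (n : ℝ) * ξ₁)) with hc_def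
  have hnc : ∀ n, ‖c n‖ = a n := by
    intro n
    rw [hc_def]
    simp only []
    rw [norm_mul, exp_part_norm n x ξ₁ ξ₂, mul_one, ha_def]
  have hcsum : Summable c := by
    refine Summable.of_norm_bounded_eventually (hGsum.mul_left D) ?_
    refine Filter.eventually_cofinite.mpr ((Set.finite_singleton m₀).subset ?_)
    intro n hn
    simp only [Set.mem_setOf_eq] at hn
    by_contra hne
    rw [Set.mem_singleton_iff] at hne
    exact hn (by rw [hnc]; exact hab n hne)
  set S := ∑' n, c n with hS_def
  set R := ∑' n, ite (n = m₀) 0 (c n) with hR_def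
  have hsplit : S = c m₀ + R := Summable.tsum_eq_add_tsum_ite hcsum m₀
  set E := D * Z with hE_def
  have hE0 : 0 ≤ E := mul_nonneg hD0 hZ0
  have hRle : ‖R‖ ≤ E := by
    rw [hR_def]
    have hgs : HasSum (fun n => D * G n) E := by
      rw [hE_def, ← hGt]
      exact hGsum.hasSum.mul_left D
    refine tsum_of_norm_bounded hgs ?_
    intro n
    by_cases hn : n = m₀
    · simp [hn, hGm0]
    · rw [if_neg hn, hnc]
      exact hab n hn
  -- theta norm
  have h14 : (y ^ ((1:ℝ)/4)) ^ 2 = u := by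
    rw [← Real.rpow_natCast (y ^ ((1:ℝ)/4)) 2, ← Real.rpow_mul hy0.le, hu_def,
      Real.sqrt_eq_rpow]
    norm_num
  have hnT : ‖Theta h x y ξ₁ ξ₂‖ ^ 2 = u * ‖S‖ ^ 2 := by
    have hTheta : Theta h x y ξ₁ ξ₂ = ((y ^ ((1:ℝ)/4) : ℝ) : ℂ) * S := rfl
    rw [hTheta, norm_mul, Complex.norm_real, Real.norm_eq_abs,
      abs_of_nonneg (Real.rpow_nonneg hy0.le _), mul_pow, h14]
  -- key quadratic estimate
  have ham : a m₀ ≤ B := haB m₀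
  have h1 : ‖S‖ ≤ a m₀ + E := by
    rw [hsplit]
    refine (norm_add_le _ _).trans ?_
    rw [hnc]
    linarith [hRle]
  have h2 : a m₀ ≤ ‖S‖ + E := by
    have hcm : c m₀ = S - R := by rw [hsplit]; ring
    calc a m₀ = ‖c m₀‖ := (hnc m₀).symm
      _ = ‖S - R‖ := by rw [hcm]
      _ ≤ ‖S‖ + ‖R‖ := norm_sub_le _ _
      _ ≤ ‖S‖ + E := by linarith [hRle]
  have habs : |‖S‖ ^ 2 - a m₀ ^ 2| ≤ E * (‖S‖ + a m₀) := by
    rw [abs_le]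
    constructor
    · have hh : (a m₀ - ‖S‖) * (a m₀ + ‖S‖) ≤ E * (a m₀ + ‖S‖) :=
        mul_le_mul_of_nonneg_right (by linarith) (by positivity)
      nlinarith [hh]
    · have hh : (‖S‖ - a m₀) * (‖S‖ + a m₀) ≤ E * (‖S‖ + a m₀) :=
        mul_le_mul_of_nonneg_right (by linarith) (by positivity)
      nlinarith [hh]
  have hsum2 : ‖S‖ + a m₀ ≤ 2 * B + E := by linarith
  have key1 : |‖S‖ ^ 2 - a m₀ ^ 2| ≤ E * (2 * B + E) :=
    habs.trans (mul_le_mul_of_nonneg_left hsum2 hE0)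
  -- rpow arithmetic
  have hQu : u ^ (-A) * u = P := by
    rw [hP_def, hu_def, Real.sqrt_eq_rpow]
    calc (y ^ ((1:ℝ)/2)) ^ (-A) * y ^ ((1:ℝ)/2)
        = y ^ ((1/2) * (-A)) * y ^ ((1:ℝ)/2) := by rw [← Real.rpow_mul hy0.le]
      _ = y ^ ((1/2) * (-A) + (1:ℝ)/2) := (Real.rpow_add hy0 _ _).symm
      _ = y ^ ((-A + 1) / 2) := by ring_nf
  have hu12 : (1/2 : ℝ) ≤ u := by
    rw [hu_def]
    nlinarith [Real.sq_sqrt hy0.le, Real.sqrt_nonneg y]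
  have hQle : u ^ (-A) ≤ 2 ^ A := by
    have := Real.rpow_le_rpow_of_nonpos (by norm_num : (0:ℝ) < 1/2) hu12 (by linarith : -A ≤ 0)
    refine this.trans_eq ?_
    rw [show (1/2 : ℝ) = (2 : ℝ)⁻¹ by norm_num, Real.inv_rpow (by norm_num),
      Real.rpow_neg (by norm_num : (0:ℝ) ≤ 2), inv_inv]
  have hQ0 : 0 ≤ u ^ (-A) := Real.rpow_nonneg hu.le _
  -- part 1
  have goal1 : |u * ‖S‖ ^ 2 - u * a m₀ ^ 2| ≤ (2 * 2^A * Z + (2^A)^3 * Z^2) * CA * P := by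
    have e0 : |u * ‖S‖ ^ 2 - u * a m₀ ^ 2| = u * |‖S‖ ^ 2 - a m₀ ^ 2| := by
      rw [show u * ‖S‖ ^ 2 - u * a m₀ ^ 2 = u * (‖S‖ ^ 2 - a m₀ ^ 2) by ring,
        abs_mul, abs_of_pos hu]
    rw [e0]
    have e1 : u * (E * (2 * B + E))
        = 2 * B ^ 2 * 2 ^ A * Z * (u ^ (-A) * u)
          + (2 ^ A) ^ 2 * B ^ 2 * Z ^ 2 * (u ^ (-A)) * (u ^ (-A) * u) := by
      rw [hE_def, hD_def]; ring
    rw [hQu, hBsq] at e1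
    have e2 : (2 ^ A) ^ 2 * CA * Z ^ 2 * u ^ (-A) * P
        ≤ (2 ^ A) ^ 2 * CA * Z ^ 2 * (2 ^ A) * P := by
      have h0 : (0:ℝ) ≤ (2 ^ A) ^ 2 * CA * Z ^ 2 := by positivity
      have := mul_le_mul_of_nonneg_left hQle h0
      nlinarith [mul_le_mul_of_nonneg_right this hP0]
    calc u * |‖S‖ ^ 2 - a m₀ ^ 2| ≤ u * (E * (2 * B + E)) :=
          mul_le_mul_of_nonneg_left key1 hu.le
      _ = 2 * CA * 2 ^ A * Z * P + (2 ^ A) ^ 2 * CA * Z ^ 2 * u ^ (-A) * P := by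
          rw [e1]; try ring
      _ ≤ 2 * CA * 2 ^ A * Z * P + (2 ^ A) ^ 2 * CA * Z ^ 2 * (2 ^ A) * P := by
          linarith [e2]
      _ = (2 * 2^A * Z + (2^A)^3 * Z^2) * CA * P := by ring
  -- part 2 : the square sum
  have hsq_bound : ∀ n : ℤ, n ≠ m₀ → a n ^ 2 ≤ D ^ 2 * G n := by
    intro n hn
    have h1 := hab n hn
    have hg1 : G n ≤ 1 := by
      rw [hG_def]
      exact Real.rpow_le_one_of_one_le_of_nonpos (hk1 n hn) (by linarith)
    have hgg : G n ^ 2 ≤ G n := by nlinarith [hG0 n]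
    nlinarith [pow_le_pow_left₀ (ha0 n) h1 2, hG0 n, sq_nonneg D]
  have hasq_sum : Summable (fun n => a n ^ 2) := by
    refine Summable.of_norm_bounded_eventually
      (hGsum.mul_left (D ^ 2)) ?_
    refine Filter.eventually_cofinite.mpr ((Set.finite_singleton m₀).subset ?_)
    intro n hn
    simp only [Set.mem_setOf_eq] at hn
    by_contra hne
    rw [Set.mem_singleton_iff] at hne
    refine hn ?_
    rw [Real.norm_eq_abs, abs_of_nonneg (sq_nonneg _)]
    exact hsq_bound n hne
  set Rsq := ∑' n, ite (n = m₀) 0 (a n ^ 2) with hRsq_def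
  have hsplitT : (∑' n, a n ^ 2) = a m₀ ^ 2 + Rsq := Summable.tsum_eq_add_tsum_ite hasq_sum m₀
  have hRsq0 : 0 ≤ Rsq := tsum_nonneg fun n => by
    by_cases hn : n = m₀ <;> simp [hn, sq_nonneg]
  have hRsqle : Rsq ≤ D ^ 2 * Z := by
    rw [hRsq_def]
    have hterm : ∀ n : ℤ, ite (n = m₀) (0:ℝ) (a n ^ 2) ≤ D ^ 2 * G n := by
      intro n
      by_cases hn : n = m₀
      · simp [hn, hGm0]
      · rw [if_neg hn]; exact hsq_bound n hn
    have hsumm : Summable (fun n => ite (n = m₀) (0:ℝ) (a n ^ 2)) := by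
      refine Summable.of_norm_bounded (hGsum.mul_left (D ^ 2)) ?_
      intro n
      have h0 : (0:ℝ) ≤ ite (n = m₀) (0:ℝ) (a n ^ 2) := by
        by_cases hn : n = m₀ <;> simp [hn, sq_nonneg]
      calc ‖ite (n = m₀) (0:ℝ) (a n ^ 2)‖ = ite (n = m₀) (0:ℝ) (a n ^ 2) := by
            rw [Real.norm_eq_abs, abs_of_nonneg h0]
        _ ≤ D ^ 2 * G n := hterm n
    have := Summable.tsum_le_tsum hterm hsumm (hGsum.mul_left _)
    rw [tsum_mul_left, hGt] at this
    exact this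
  have goal2 : |u * (∑' n, a n ^ 2) - u * a m₀ ^ 2| ≤ (2^A)^3 * Z * CA * P := by
    have e0 : u * (∑' n, a n ^ 2) - u * a m₀ ^ 2 = u * Rsq := by
      rw [hsplitT]; ring
    rw [e0, abs_of_nonneg (mul_nonneg hu.le hRsq0)]
    have e1 : u * (D ^ 2 * Z)
        = (2 ^ A) ^ 2 * B ^ 2 * Z * (u ^ (-A)) * (u ^ (-A) * u) := by
      rw [hD_def]; ring
    rw [hQu, hBsq] at e1
    calc u * Rsq ≤ u * (D ^ 2 * Z) :=
          mul_le_mul_of_nonneg_left hRsqle hu.le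
      _ = (2 ^ A) ^ 2 * CA * Z * u ^ (-A) * P := by rw [e1]; try ring
      _ ≤ (2 ^ A) ^ 2 * CA * Z * (2 ^ A) * P := by
          have h0 : (0:ℝ) ≤ (2 ^ A) ^ 2 * CA * Z := by positivity
          nlinarith [mul_le_mul_of_nonneg_right (mul_le_mul_of_nonneg_left hQle h0) hP0]
      _ = (2^A)^3 * Z * CA * P := by ring
  -- assemble
  have hcomm : ∀ m : ℤ, ‖h (u * ((m : ℝ) - ξ₂))‖ = a m := fun m => by
    rw [ha_def, mul_comm]
  constructor
  · rw [hnT, hcomm m₀]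
    exact goal1
  · rw [hcomm m₀]
    have : (∑' m : ℤ, ‖h (u * ((m : ℝ) - ξ₂))‖ ^ 2) = ∑' n, a n ^ 2 :=
      tsum_congr fun m => by rw [hcomm m]
    rw [this]
    exact goal2

/-- Asymptotics of `|Θ_h|²` high in the cusp (`y ≥ 1/2`), uniformly in `x, ξ`:
it is approximated by `√y ∑_m |h(√y(m-ξ₂))|²`, and indeed by the single term
`m₀` nearest to `ξ₂`, up to an error `O(C_{A,h} y^{(-A+1)/2})`. -/
theorem theta_cusp_estimate (h : SchwartzMap ℝ ℂ) (A : ℝ) (hA : 1 < A)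
    (CA : ℝ) (hCA : ∀ x : ℝ, ((1 + |x|) ^ A * ‖h x‖) ^ 2 ≤ CA) :
    ∃ c : ℝ, 0 < c ∧ ∀ y : ℝ, 1/2 ≤ y → ∀ x ξ₁ ξ₂ : ℝ,
      (|‖Theta h x y ξ₁ ξ₂‖ ^ 2
          - Real.sqrt y * ∑' m : ℤ, ‖h (Real.sqrt y * ((m : ℝ) - ξ₂))‖ ^ 2|
        ≤ c * CA * y ^ ((-A + 1) / 2))
      ∧ ∀ m₀ : ℤ, |(m₀ : ℝ) - ξ₂| ≤ 1/2 →
        |‖Theta h x y ξ₁ ξ₂‖ ^ 2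
            - Real.sqrt y * ‖h (Real.sqrt y * ((m₀ : ℝ) - ξ₂))‖ ^ 2|
          ≤ c * CA * y ^ ((-A + 1) / 2) := by
  have hCA0 : 0 ≤ CA := le_trans (by positivity) (hCA 0)
  have hZ0 : 0 ≤ Zc A := Zc_nonneg A
  have h2A0 : (0:ℝ) ≤ 2 ^ A := Real.rpow_nonneg (by norm_num) A
  refine ⟨2 * 2^A * Zc A + (2^A)^3 * (Zc A)^2 + (2^A)^3 * Zc A + 1, by positivity, ?_⟩
  intro y hy x ξ₁ ξ₂
  have hy0 : (0:ℝ) < y := by linarith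
  have hP0 : 0 ≤ y ^ ((-A + 1) / 2) := Real.rpow_nonneg hy0.le _
  have hCP : 0 ≤ CA * y ^ ((-A + 1) / 2) := mul_nonneg hCA0 hP0
  constructor
  · -- part 1, via m₀ = round ξ₂
    set m₀ : ℤ := round ξ₂ with hm_def
    have hm₀ : |(m₀ : ℝ) - ξ₂| ≤ 1/2 := by
      rw [abs_sub_comm]
      exact abs_sub_round ξ₂
    obtain ⟨k1, k2⟩ := main_est h A hA CA hCA y hy x ξ₁ ξ₂ m₀ hm₀
    have tri := abs_sub_le (‖Theta h x y ξ₁ ξ₂‖ ^ 2)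
      (Real.sqrt y * ‖h (Real.sqrt y * ((m₀ : ℝ) - ξ₂))‖ ^ 2)
      (Real.sqrt y * ∑' m : ℤ, ‖h (Real.sqrt y * ((m : ℝ) - ξ₂))‖ ^ 2)
    rw [abs_sub_comm (Real.sqrt y * ‖h (Real.sqrt y * ((m₀ : ℝ) - ξ₂))‖ ^ 2)] at tri
    linarith [tri, k1, k2, hCP]
  · intro m₀ hm₀
    obtain ⟨k1, _⟩ := main_est h A hA CA hCA y hy x ξ₁ ξ₂ m₀ hm₀
    have hextra : 0 ≤ (2^A)^3 * Zc A * (CA * y ^ ((-A + 1) / 2)) :=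
      mul_nonneg (mul_nonneg (pow_nonneg h2A0 3) hZ0) hCP
    linarith [k1, hCP, hextra]
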